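/- For N ≥ 3 and any integers i ≠ j with 1 ≤ i,j ≤ N and any integer m, there exists a word w in the generators {e_{pq}^{±1} : p ≠ q} of SL_N(ℤ) representing e_{ij}^m whose length is at most 4 + 6·log_τ(1 + |m|·√5), where τ = (1+√5)/2. -/

import Mathlib

open Matrix Real

set_option linter.unusedSectionVars false
namespace CompressAux

variable {N : ℕ}

/-- letters -/
def IsGen (x : Matrix (Fin N) (Fin N) ℤ) : Prop :=
  ∃ p q : Fin N, p ≠ q ∧ (x = 1 + single p q 1 ∨ x = 1 - single p q 1)

/-- `1 + a E_{ij} + b E_{ik}` -/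
def Mm (i j k : Fin N) (a b : ℤ) : Matrix (Fin N) (Fin N) ℤ :=
  1 + single i j a + single i k b

section algebra

variable {i j k : Fin N} (hij : i ≠ j) (hik : i ≠ k) (hjk : j ≠ k)

theorem Mm_zero : Mm i j k 0 0 = 1 := by simp [Mm]

include hij hik in
theorem Mm_mul (a b c d : ℤ) :
    Mm i j k a b * Mm i j k c d = Mm i j k (a + c) (b + d) := by
  simp [Mm, mul_add, add_mul, one_mul, mul_one, ne_eq, not_false_iff,
    single_mul_single_of_ne, single_mul_single_same,
    hij.symm, hik.symm, single_add]
  abel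

include hij hik hjk in
theorem conj_jk (a b : ℤ) :
    (1 - single j k 1) * Mm i j k a b * (1 + single j k 1) =
      Mm i j k a (b + a) := by
  simp [Mm, mul_add, add_mul, sub_mul, mul_sub, one_mul, mul_one, ne_eq, not_false_iff,
    single_mul_single_of_ne, single_mul_single_same,
    hij.symm, hik.symm, hjk, hjk.symm, single_add, sub_eq_add_neg]
  abel

include hij hik hjk in
theorem conj_kj (a b : ℤ) :
    (1 - single k j 1) * Mm i j k a b * (1 + single k j 1) =
      Mm i j k (a + b) b := by
  simp [Mm, mul_add, add_mul, sub_mul, mul_sub, one_mul, mul_one, ne_eq, not_false_iff,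
    single_mul_single_of_ne, single_mul_single_same,
    hij.symm, hik.symm, hjk, hjk.symm, single_add, sub_eq_add_neg]
  abel

theorem gen_mul_inv {p q : Fin N} (hpq : p ≠ q) :
    (1 + single p q (1:ℤ)) * (1 - single p q 1) = 1 := by
  simp [mul_sub, add_mul, single_mul_single_of_ne, hpq.symm]

theorem gen_inv_mul {p q : Fin N} (hpq : p ≠ q) :
    (1 - single p q (1:ℤ)) * (1 + single p q 1) = 1 := by
  simp [mul_add, sub_mul, single_mul_single_of_ne, hpq.symm]

include hij hik hjk in
theorem conj_kj' (a b : ℤ) :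
    (1 + single k j 1) * Mm i j k a b * (1 - single k j 1) =
      Mm i j k (a - b) b := by
  have h := conj_kj hij hik hjk (a - b) b
  rw [sub_add_cancel] at h
  rw [← h]
  simp only [← mul_assoc]
  rw [gen_mul_inv hjk.symm, one_mul, mul_assoc _ (1 + single k j 1),
    gen_mul_inv hjk.symm, mul_one]

include hij hik in
theorem Mm_mulZ (a b c d : ℤ) (Z : Matrix (Fin N) (Fin N) ℤ) :
    Mm i j k a b * (Mm i j k c d * Z) = Mm i j k (a + c) (b + d) * Z := by
  rw [← mul_assoc, Mm_mul hij hik]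

include hij hik hjk in
theorem conj_jkZ (a b : ℤ) (Z : Matrix (Fin N) (Fin N) ℤ) :
    (1 - single j k 1) * (Mm i j k a b * ((1 + single j k 1) * Z)) =
      Mm i j k a (b + a) * Z := by
  simp only [← mul_assoc]
  rw [conj_jk hij hik hjk]

include hij hik hjk in
theorem conj_kjZ (a b : ℤ) (Z : Matrix (Fin N) (Fin N) ℤ) :
    (1 - single k j 1) * (Mm i j k a b * ((1 + single k j 1) * Z)) =
      Mm i j k (a + b) b * Z := by
  simp only [← mul_assoc]
  rw [conj_kj hij hik hjk]

include hij hik hjk in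
theorem conj_kj'Z (a b : ℤ) (Z : Matrix (Fin N) (Fin N) ℤ) :
    (1 + single k j 1) * (Mm i j k a b * ((1 - single k j 1) * Z)) =
      Mm i j k (a - b) b * Z := by
  simp only [← mul_assoc]
  rw [conj_kj' hij hik hjk]

include hij hik in
theorem replicate_prod_ij (d : ℕ) :
    (List.replicate d (1 + single i j (1:ℤ))).prod = Mm i j k d 0 := by
  induction d with
  | zero => simp [Mm_zero]
  | succ n ih =>
      rw [List.replicate_succ, List.prod_cons, ih]
      have : (1 : Matrix (Fin N) (Fin N) ℤ) + single i j 1 = Mm i j k 1 0 := by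
        simp [Mm]
      rw [this, Mm_mul hij hik, add_comm (1:ℤ) (n:ℤ)]
      push_cast
      norm_num

include hij hik in
theorem replicate_prod_ik (d : ℕ) :
    (List.replicate d (1 + single i k (1:ℤ))).prod = Mm i j k 0 d := by
  induction d with
  | zero => simp [Mm_zero]
  | succ n ih =>
      rw [List.replicate_succ, List.prod_cons, ih]
      have : (1 : Matrix (Fin N) (Fin N) ℤ) + single i k 1 = Mm i j k 0 1 := by
        simp [Mm]
      rw [this, Mm_mul hij hik, add_comm (1:ℤ) (n:ℤ)]
      push_cast
      norm_num

end algebra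

/-- the digit-pair state -/
def xy : List (ℕ × ℕ) → ℕ × ℕ
  | [] => (0, 0)
  | (e, d) :: ps =>
      let p := xy ps
      (2 * p.1 + p.2 + e + 2 * d, p.1 + p.2 + e + d)

section word

variable {i j k : Fin N} (hij : i ≠ j) (hik : i ≠ k) (hjk : j ≠ k)

include hij hik hjk in
theorem word_exists (ps : List (ℕ × ℕ)) :
    ∃ w : List (Matrix (Fin N) (Fin N) ℤ), (∀ x ∈ w, IsGen x) ∧
      w.prod = Mm i j k ((xy ps).1 : ℤ) ((xy ps).2 : ℤ) ∧
      w.length = 4 * ps.length + (ps.map (fun p => p.1 + p.2)).sum := by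
  induction ps with
  | nil => exact ⟨[], by simp, by simp [xy, Mm_zero], by simp [xy]⟩
  | cons p ps ih =>
      obtain ⟨e, d⟩ := p
      obtain ⟨w', hgen', hprod', hlen'⟩ := ih
      refine ⟨[1 - single k j 1] ++ [1 - single j k 1] ++
        (w' ++ List.replicate d (1 + single i j 1)) ++ [1 + single j k 1] ++
        List.replicate e (1 + single i k 1) ++ [1 + single k j 1], ?_, ?_, ?_⟩
      · intro x hx
        simp only [List.mem_append, List.mem_singleton, List.eq_of_mem_replicate] at hx
        rcases hx with ((((hx | hx) | hx) | hx) | hx) | hx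
        · exact ⟨k, j, (Ne.symm hjk), Or.inr hx⟩
        · exact ⟨j, k, hjk, Or.inr hx⟩
        · rcases hx with hx | hx
          · exact hgen' x hx
          · exact ⟨i, j, hij, Or.inl (List.eq_of_mem_replicate hx)⟩
        · exact ⟨j, k, hjk, Or.inl hx⟩
        · exact ⟨i, k, hik, Or.inl (List.eq_of_mem_replicate hx)⟩
        · exact ⟨k, j, Ne.symm hjk, Or.inl hx⟩
      · simp only [List.prod_append, List.prod_cons, List.prod_nil, mul_one, one_mul,
          hprod', replicate_prod_ij hij hik, replicate_prod_ik hij hik, mul_assoc]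
        rw [Mm_mulZ hij hik, conj_jkZ hij hik hjk _ _, Mm_mulZ hij hik, ← mul_assoc,
          conj_kj hij hik hjk]
        have h1 : (xy ((e, d) :: ps)).1 = 2 * (xy ps).1 + (xy ps).2 + e + 2 * d := rfl
        have h2 : (xy ((e, d) :: ps)).2 = (xy ps).1 + (xy ps).2 + e + d := rfl
        rw [h1, h2]
        congr 1 <;> push_cast <;> ring
      · simp only [List.length_append, List.length_cons, List.length_nil,
          List.length_replicate, hlen', List.map_cons, List.sum_cons, List.length_cons]
        ring

theorem inv_word (w : List (Matrix (Fin N) (Fin N) ℤ)) (h : ∀ x ∈ w, IsGen x) :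
    ∃ w' : List (Matrix (Fin N) (Fin N) ℤ), (∀ x ∈ w', IsGen x) ∧ w'.length = w.length ∧
      w'.prod * w.prod = 1 ∧ w.prod * w'.prod = 1 := by
  induction w with
  | nil => exact ⟨[], by simp, rfl, by simp, by simp⟩
  | cons x t ih =>
      obtain ⟨t', hg, hl, h1, h2⟩ := ih (fun y hy => h y (List.mem_cons_of_mem _ hy))
      obtain ⟨p, q, hpq, hx⟩ := h x (List.mem_cons_self)
      rcases hx with hx | hx
      · refine ⟨t' ++ [1 - single p q 1], ?_, by simp [hl], ?_, ?_⟩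
        · intro y hy
          rcases List.mem_append.1 hy with hy | hy
          · exact hg y hy
          · exact ⟨p, q, hpq, Or.inr (List.mem_singleton.1 hy)⟩
        · simp only [List.prod_append, List.prod_cons, List.prod_nil, mul_one, hx]
          rw [mul_assoc, ← mul_assoc (1 - single p q 1), gen_inv_mul hpq, one_mul, h1]
        · simp only [List.prod_append, List.prod_cons, List.prod_nil, mul_one, hx]
          rw [mul_assoc, ← mul_assoc t.prod, h2, one_mul, gen_mul_inv hpq]
      · refine ⟨t' ++ [1 + single p q 1], ?_, by simp [hl], ?_, ?_⟩
        · intro y hy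
          rcases List.mem_append.1 hy with hy | hy
          · exact hg y hy
          · exact ⟨p, q, hpq, Or.inl (List.mem_singleton.1 hy)⟩
        · simp only [List.prod_append, List.prod_cons, List.prod_nil, mul_one, hx]
          rw [mul_assoc, ← mul_assoc (1 + single p q 1), gen_mul_inv hpq, one_mul, h1]
        · simp only [List.prod_append, List.prod_cons, List.prod_nil, mul_one, hx]
          rw [mul_assoc, ← mul_assoc t.prod, h2, one_mul, gen_inv_mul hpq]

end word

theorem xy_append (ps : List (ℕ × ℕ)) (e d : ℕ) :
    xy (ps ++ [(e, d)]) =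
      ((xy ps).1 + e * Nat.fib (2 * ps.length + 2) + d * Nat.fib (2 * ps.length + 3),
       (xy ps).2 + e * Nat.fib (2 * ps.length + 1) + d * Nat.fib (2 * ps.length + 2)) := by
  induction ps with
  | nil =>
      simp only [List.nil_append, List.length_nil]
      norm_num [xy, Nat.fib_one, Nat.fib_two, show Nat.fib 3 = 2 from rfl]
      omega
  | cons p t ih =>
      obtain ⟨a, b⟩ := p
      have L := t.length
      have hf3 : Nat.fib (2 * t.length + 3) =
          Nat.fib (2 * t.length + 1) + Nat.fib (2 * t.length + 2) := by
        rw [show 2 * t.length + 3 = (2 * t.length + 1) + 2 by ring, Nat.fib_add_two]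
      have hf4 : Nat.fib (2 * t.length + 4) =
          Nat.fib (2 * t.length + 2) + Nat.fib (2 * t.length + 3) := by
        rw [show 2 * t.length + 4 = (2 * t.length + 2) + 2 by ring, Nat.fib_add_two]
      have hf5 : Nat.fib (2 * t.length + 5) =
          Nat.fib (2 * t.length + 3) + Nat.fib (2 * t.length + 4) := by
        rw [show 2 * t.length + 5 = (2 * t.length + 3) + 2 by ring, Nat.fib_add_two]
      simp only [List.cons_append, xy, List.append_eq, ih, List.length_cons]
      rw [show 2 * (t.length + 1) + 1 = 2 * t.length + 3 by ring,
        show 2 * (t.length + 1) + 2 = 2 * t.length + 4 by ring,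
        show 2 * (t.length + 1) + 3 = 2 * t.length + 5 by ring, hf5, hf4, hf3]
      simp only [Prod.mk.injEq]
      constructor <;> ring

theorem rep_exists : ∀ K r, r < Nat.fib (2 * K + 1) →
    ∃ ps : List (ℕ × ℕ), ps.length = K ∧ (∀ p ∈ ps, p.1 + p.2 ≤ 1) ∧ (xy ps).2 = r := by
  intro K
  induction K with
  | zero =>
      intro r hr
      interval_cases r
      exact ⟨[], rfl, by simp, rfl⟩
  | succ K ih =>
      intro r hr
      have hfib : Nat.fib (2 * (K + 1) + 1) = Nat.fib (2 * K + 1) + Nat.fib (2 * K + 2) := by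
        rw [show 2 * (K + 1) + 1 = (2 * K + 1) + 2 by ring, Nat.fib_add_two]
      have hfib2 : Nat.fib (2 * K + 2) = Nat.fib (2 * K) + Nat.fib (2 * K + 1) := by
        rw [show 2 * K + 2 = (2 * K) + 2 by ring, Nat.fib_add_two]
      have hmono : Nat.fib (2 * K) ≤ Nat.fib (2 * K + 1) := Nat.fib_le_fib_succ
      by_cases h2 : Nat.fib (2 * K + 2) ≤ r
      · obtain ⟨ps, hlen, hadm, hval⟩ := ih (r - Nat.fib (2 * K + 2)) (by omega)
        refine ⟨ps ++ [(0, 1)], by simp [hlen], ?_, ?_⟩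
        · intro p hp
          rcases List.mem_append.1 hp with hp | hp
          · exact hadm p hp
          · simp at hp; simp [hp]
        · rw [xy_append]
          simp only [hlen, hval]
          omega
      · by_cases h1 : Nat.fib (2 * K + 1) ≤ r
        · obtain ⟨ps, hlen, hadm, hval⟩ := ih (r - Nat.fib (2 * K + 1)) (by omega)
          refine ⟨ps ++ [(1, 0)], by simp [hlen], ?_, ?_⟩
          · intro p hp
            rcases List.mem_append.1 hp with hp | hp
            · exact hadm p hp
            · simp at hp; simp [hp]
          · rw [xy_append]
            simp only [hlen, hval]
            omega
        · obtain ⟨ps, hlen, hadm, hval⟩ := ih r (by omega)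
          refine ⟨ps ++ [(0, 0)], by simp [hlen], ?_, ?_⟩
          · intro p hp
            rcases List.mem_append.1 hp with hp | hp
            · exact hadm p hp
            · simp at hp; simp [hp]
          · rw [xy_append]
            simp only [hlen, hval]
            omega

theorem rep_exists_top (K m : ℕ) (h1 : Nat.fib (2 * K + 1) ≤ m) (h2 : m < Nat.fib (2 * K + 3)) :
    ∃ ps : List (ℕ × ℕ), ps.length = K + 1 ∧ (∀ p ∈ ps, p.1 + p.2 ≤ 1) ∧ (xy ps).2 = m := by
  have hfib : Nat.fib (2 * K + 3) = Nat.fib (2 * K + 1) + Nat.fib (2 * K + 2) := by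
    rw [show 2 * K + 3 = (2 * K + 1) + 2 by ring, Nat.fib_add_two]
  have hfib2 : Nat.fib (2 * K + 2) = Nat.fib (2 * K) + Nat.fib (2 * K + 1) := by
    rw [show 2 * K + 2 = (2 * K) + 2 by ring, Nat.fib_add_two]
  have hmono : Nat.fib (2 * K) ≤ Nat.fib (2 * K + 1) := Nat.fib_le_fib_succ
  by_cases hc : Nat.fib (2 * K + 2) ≤ m
  · obtain ⟨ps, hlen, hadm, hval⟩ := rep_exists K (m - Nat.fib (2 * K + 2)) (by omega)
    refine ⟨ps ++ [(0, 1)], by simp [hlen], ?_, ?_⟩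
    · intro p hp
      rcases List.mem_append.1 hp with hp | hp
      · exact hadm p hp
      · simp at hp; simp [hp]
    · rw [xy_append]; simp only [hlen, hval]; omega
  · obtain ⟨ps, hlen, hadm, hval⟩ := rep_exists K (m - Nat.fib (2 * K + 1)) (by omega)
    refine ⟨ps ++ [(1, 0)], by simp [hlen], ?_, ?_⟩
    · intro p hp
      rcases List.mem_append.1 hp with hp | hp
      · exact hadm p hp
      · simp at hp; simp [hp]
    · rw [xy_append]; simp only [hlen, hval]; omega

theorem scale_exists (m : ℕ) (hm : 2 ≤ m) :
    ∃ K, Nat.fib (2 * K + 3) ≤ m ∧ m < Nat.fib (2 * K + 5) := by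
  induction m, hm using Nat.le_induction with
  | base => exact ⟨0, by norm_num [show Nat.fib 3 = 2 from rfl, show Nat.fib 5 = 5 from rfl]⟩
  | succ m hm' ih =>
      obtain ⟨K, hK1, hK2⟩ := ih
      by_cases h : m + 1 < Nat.fib (2 * K + 5)
      · exact ⟨K, by omega, h⟩
      · have e3 : Nat.fib (2 * (K + 1) + 3) = Nat.fib (2 * K + 5) := by
          rw [show 2 * (K + 1) + 3 = 2 * K + 5 by ring]
        have e4 : Nat.fib (2 * (K + 1) + 5) = Nat.fib (2 * K + 7) := by
          rw [show 2 * (K + 1) + 5 = 2 * K + 7 by ring]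
        refine ⟨K + 1, by omega, ?_⟩
        have e1 : Nat.fib (2 * K + 5) < Nat.fib (2 * K + 6) :=
          Nat.fib_lt_fib_succ (by omega)
        have e2 : Nat.fib (2 * K + 6) ≤ Nat.fib (2 * K + 7) := Nat.fib_mono (by omega)
        omega

theorem digit_sum_le (ps : List (ℕ × ℕ)) (h : ∀ p ∈ ps, p.1 + p.2 ≤ 1) :
    (ps.map (fun p => p.1 + p.2)).sum ≤ ps.length := by
  induction ps with
  | nil => simp
  | cons p t ih =>
      simp only [List.map_cons, List.sum_cons, List.length_cons]
      have := h p (List.mem_cons_self)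
      have := ih (fun q hq => h q (List.mem_cons_of_mem _ hq))
      omega

theorem gold_pow_le (n : ℕ) : goldenRatio ^ n ≤ 1 + Real.sqrt 5 * Nat.fib n := by
  have h := Real.coe_fib_eq n
  have h5 : Real.sqrt 5 > 0 := by positivity
  rw [eq_div_iff (ne_of_gt h5)] at h
  have hψ : |goldenConj| < 1 := abs_lt.2 ⟨neg_one_lt_goldenConj, by have := goldenConj_neg; linarith⟩
  have : goldenConj ^ n ≤ 1 := by
    calc goldenConj ^ n ≤ |goldenConj ^ n| := le_abs_self _
    _ = |goldenConj| ^ n := by rw [abs_pow]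
    _ ≤ 1 := pow_le_one₀ (abs_nonneg _) hψ.le
  nlinarith

theorem le_logb_of_fib_le {n : ℕ} {x : ℝ} (h : (Nat.fib n : ℝ) * Real.sqrt 5 ≤ x) :
    (n : ℝ) ≤ Real.logb goldenRatio (1 + x) := by
  have hφ : (1:ℝ) < goldenRatio := one_lt_goldenRatio
  have hx : (0:ℝ) < 1 + x := by
    have : (0:ℝ) ≤ (Nat.fib n : ℝ) * Real.sqrt 5 := by positivity
    linarith
  rw [Real.le_logb_iff_rpow_le hφ hx]
  rw [Real.rpow_natCast]
  calc goldenRatio ^ n ≤ 1 + Real.sqrt 5 * Nat.fib n := gold_pow_le n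
  _ ≤ 1 + x := by rw [mul_comm]; linarith

section assemble

variable {i j k : Fin N} (hij : i ≠ j) (hik : i ≠ k) (hjk : j ≠ k)

theorem Mm_final (m : ℤ) : Mm i j k m 0 = 1 + m • single i j 1 := by
  simp [Mm, smul_single]

include hij hik hjk in
theorem pos_word (n : ℕ) (hn : 2 ≤ n) :
    ∃ w : List (Matrix (Fin N) (Fin N) ℤ), (∀ x ∈ w, IsGen x) ∧
      w.prod = Mm i j k (n : ℤ) 0 ∧
      (w.length : ℝ) ≤ 4 + 6 * Real.logb goldenRatio (1 + (n : ℝ) * Real.sqrt 5) := by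
  obtain ⟨K, hK1, hK2⟩ := scale_exists n hn
  obtain ⟨ps, hlen, hadm, hval⟩ := rep_exists_top (K + 1) n
    (by rw [show 2 * (K + 1) + 1 = 2 * K + 3 by ring]; exact hK1)
    (by rw [show 2 * (K + 1) + 3 = 2 * K + 5 by ring]; exact hK2)
  obtain ⟨w0, hg0, hp0, hl0⟩ := word_exists hij hik hjk ps
  obtain ⟨w1, hg1, hl1, hinv1, hinv2⟩ := inv_word w0 hg0
  rw [hval] at hp0
  set x : ℤ := ((xy ps).1 : ℤ) with hx
  have hw1 : w1.prod = Mm i j k (-x) (-(n : ℤ)) := by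
    have hcan : w0.prod * Mm i j k (-x) (-(n : ℤ)) = 1 := by
      rw [hp0, Mm_mul hij hik]
      norm_num [Mm_zero]
    calc w1.prod = w1.prod * (w0.prod * Mm i j k (-x) (-(n : ℤ))) := by rw [hcan, mul_one]
    _ = w1.prod * w0.prod * Mm i j k (-x) (-(n : ℤ)) := by rw [mul_assoc]
    _ = Mm i j k (-x) (-(n : ℤ)) := by rw [hinv1, one_mul]
  refine ⟨w0 ++ [1 + single k j 1] ++ w1 ++ [1 - single k j 1], ?_, ?_, ?_⟩
  · intro y hy
    simp only [List.mem_append, List.mem_singleton] at hy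
    rcases hy with ((hy | hy) | hy) | hy
    · exact hg0 y hy
    · exact ⟨k, j, Ne.symm hjk, Or.inl hy⟩
    · exact hg1 y hy
    · exact ⟨k, j, Ne.symm hjk, Or.inr hy⟩
  · simp only [List.prod_append, List.prod_cons, List.prod_nil, mul_one, hw1, hp0]
    simp only [mul_assoc]
    rw [← mul_assoc (1 + single k j 1), conj_kj' hij hik hjk, Mm_mul hij hik]
    congr 1 <;> ring
  · have hD := digit_sum_le ps hadm
    have hlen0 : w0.length ≤ 5 * (K + 2) := by
      rw [hl0, hlen]
      omega
    have htot : (w0 ++ [1 + single k j 1] ++ w1 ++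
        [1 - single k j 1]).length = w0.length + w1.length + 2 := by
      simp [List.length_append]
      omega
    have hfib5 : (Nat.fib (2 * K + 3) : ℝ) * Real.sqrt 5 ≤ (n : ℝ) * Real.sqrt 5 := by
      have : (Nat.fib (2 * K + 3) : ℝ) ≤ (n : ℝ) := by exact_mod_cast hK1
      have h5 : (0:ℝ) ≤ Real.sqrt 5 := Real.sqrt_nonneg 5
      nlinarith
    have hlog := le_logb_of_fib_le (x := (n : ℝ) * Real.sqrt 5) hfib5
    rw [htot, hl1]
    push_cast
    have hcast : ((2 * K + 3 : ℕ) : ℝ) = 2 * (K : ℝ) + 3 := by push_cast; ring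
    rw [hcast] at hlog
    have : (w0.length : ℝ) ≤ 5 * ((K : ℝ) + 2) := by exact_mod_cast hlen0
    linarith

end assemble

end CompressAux

open CompressAux in
/-- For `N ≥ 3`, `i ≠ j` and any integer `m`, there is a word `w` in the elementary
matrices `e_{pq}^{±1}` of `SL_N(ℤ)` whose product is `e_{ij}^m = 1 + m·E_{ij}` and whose
length is at most `4 + 6·log_τ(1 + |m|·√5)`, where `τ = (1+√5)/2`. -/
theorem compress_power (N : ℕ) (hN : 3 ≤ N) (i j : Fin N) (hij : i ≠ j) (m : ℤ) :
    ∃ w : List (Matrix (Fin N) (Fin N) ℤ),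
      (∀ x ∈ w, ∃ p q : Fin N, p ≠ q ∧
          (x = 1 + single p q 1 ∨ x = 1 - single p q 1)) ∧
      w.prod = 1 + m • single i j 1 ∧
      (w.length : ℝ) ≤
        4 + 6 * Real.logb ((1 + Real.sqrt 5) / 2) (1 + |(m : ℝ)| * Real.sqrt 5) := by
  have hgold : ((1 + Real.sqrt 5) / 2) = goldenRatio := rfl
  rw [hgold]
  -- find a third index
  have hk : ∃ k : Fin N, i ≠ k ∧ j ≠ k := by
    by_contra hcon
    push_neg at hcon
    have hsub : (Finset.univ : Finset (Fin N)) ⊆ {i, j} := by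
      intro x _
      by_cases hxi : x = i
      · simp [hxi]
      · have := hcon x (fun h => hxi h.symm)
        simp [this.symm]
    have h1 : (Finset.univ : Finset (Fin N)).card ≤ ({i, j} : Finset (Fin N)).card :=
      Finset.card_le_card hsub
    have h2 : ({i, j} : Finset (Fin N)).card ≤ 2 := by
      refine (Finset.card_insert_le _ _).trans ?_
      simp
    simp [Finset.card_univ] at h1
    omega
  obtain ⟨k, hik, hjk⟩ := hk
  have hlog0 : (0:ℝ) ≤ Real.logb goldenRatio (1 + |(m : ℝ)| * Real.sqrt 5) := by
    apply Real.logb_nonneg one_lt_goldenRatio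
    have : (0:ℝ) ≤ |(m : ℝ)| * Real.sqrt 5 := by positivity
    linarith
  have habs : ((m.natAbs : ℝ)) = |(m : ℝ)| := by
    push_cast [Nat.cast_natAbs]
    norm_num
  rcases lt_trichotomy m.natAbs 2 with hsmall | hbig
  · interval_cases h : m.natAbs
    · -- m = 0
      have hm : m = 0 := Int.natAbs_eq_zero.1 h
      refine ⟨[], by simp, by simp [hm], by simpa using by linarith⟩
    · -- m = ±1
      rcases Int.natAbs_eq_iff.1 h with hm | hm
      · refine ⟨[1 + single i j 1], ?_, ?_, ?_⟩
        · intro x hx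
          simp at hx
          exact ⟨i, j, hij, Or.inl hx⟩
        · simp [hm]
        · simp only [List.length_singleton]
          push_cast
          linarith
      · refine ⟨[1 - single i j 1], ?_, ?_, ?_⟩
        · intro x hx
          simp at hx
          exact ⟨i, j, hij, Or.inr hx⟩
        · simp [hm, sub_eq_add_neg]
        · simp only [List.length_singleton]
          push_cast
          linarith
  · -- |m| ≥ 2
    obtain ⟨w, hg, hp, hlen⟩ := pos_word hij hik hjk m.natAbs (by omega)
    rw [habs] at hlen
    rcases Int.natAbs_eq m with hm | hm
    · refine ⟨w, fun x hx => hg x hx, ?_, hlen⟩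
      rw [hp, Mm_final, ← hm]
    · obtain ⟨w', hg', hl', hinv1, hinv2⟩ := inv_word w hg
      refine ⟨w', fun x hx => hg' x hx, ?_, by rw [hl']; exact hlen⟩
      have hcan : w.prod * Mm i j k (-(m.natAbs : ℤ)) 0 = 1 := by
        rw [hp, Mm_mul hij hik]
        norm_num [Mm_zero]
      have : w'.prod = Mm i j k (-(m.natAbs : ℤ)) 0 := by
        calc w'.prod = w'.prod * (w.prod * Mm i j k (-(m.natAbs : ℤ)) 0) := by
              rw [hcan, mul_one]
        _ = w'.prod * w.prod * Mm i j k (-(m.natAbs : ℤ)) 0 := by rw [mul_assoc]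
        _ = Mm i j k (-(m.natAbs : ℤ)) 0 := by rw [hinv1, one_mul]
      rw [this, Mm_final, ← hm]
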